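/- arXiv:1207.7108 — 4 statements merged into one kernel-verified Lean document; each statement's English description precedes it below -/
import Mathlib

section
/- For the system g'_{j+1} = g_j²/2 - g_j g_{j+1}, g_1(x) = 2/(x+2), g_{j+1}(0) = 0: if lim_{x→∞} x·g_j(x) = 2 and lim_{x→∞} x·g_{j+1}(x) exists, then lim_{x→∞} x·g_{j+1}(x) = 2. -/
open Filter

theorem xg_limit (g f : ℝ → ℝ)
    (hinit : f 0 = 0)
    (hderiv : ∀ x ≥ (0:ℝ), HasDerivAt f ((g x)^2 / 2 - g x * f x) x)
    (hg : Tendsto (fun x => x * g x) atTop (nhds 2))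
    (hf : ∃ L : ℝ, Tendsto (fun x => x * f x) atTop (nhds L)) :
    Tendsto (fun x => x * f x) atTop (nhds 2) := by
  obtain ⟨L, hL⟩ := hf
  -- f → 0
  have hinv : Tendsto (fun x : ℝ => x⁻¹) atTop (nhds 0) := tendsto_inv_atTop_zero
  have hf0 : Tendsto f atTop (nhds 0) := by
    have h := hL.mul hinv
    rw [mul_zero] at h
    refine h.congr' ?_
    filter_upwards [eventually_gt_atTop (0:ℝ)] with x hx
    field_simp
  -- x² f' → 2 - 2L, i.e. f'/(d/dx x⁻¹) → 2L - 2
  have hdiv : Tendsto (fun x => ((g x)^2 / 2 - g x * f x) / (-(x^2)⁻¹)) atTop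
      (nhds (2*L - 2)) := by
    have h : Tendsto (fun x => -((x * g x)^2/2 - (x * g x) * (x * f x))) atTop
        (nhds (-(2^2/2 - 2*L))) := (((hg.pow 2).div_const 2).sub (hg.mul hL)).neg
    have h2 : -((2:ℝ)^2/2 - 2*L) = 2*L - 2 := by ring
    rw [h2] at h
    refine h.congr' ?_
    filter_upwards [eventually_gt_atTop (0:ℝ)] with x hx
    have hx' : x ≠ 0 := ne_of_gt hx
    field_simp
  have hlh : Tendsto (fun x => f x / x⁻¹) atTop (nhds (2*L - 2)) := by
    refine HasDerivAt.lhopital_zero_atTop (f' := fun x => (g x)^2/2 - g x * f x)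
      (g' := fun x => -(x^2)⁻¹) ?_ ?_ ?_ hf0 hinv hdiv
    · filter_upwards [eventually_ge_atTop (0:ℝ)] with x hx
      exact hderiv x hx
    · filter_upwards [eventually_gt_atTop (0:ℝ)] with x hx
      exact hasDerivAt_inv (ne_of_gt hx)
    · filter_upwards [eventually_gt_atTop (0:ℝ)] with x hx
      simp [ne_of_gt hx]
  have heq : (fun x => f x / x⁻¹) = fun x => x * f x := by
    funext x; rw [div_eq_mul_inv, inv_inv, mul_comm]
  rw [heq] at hlh
  have : L = 2*L - 2 := tendsto_nhds_unique hL hlh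
  have hL2 : L = 2 := by linarith
  rwa [hL2] at hL
end

section
/- Let h(x) = 1/(1-x) and suppose h_k, h_{k+1} are C¹ functions on [0,1] with h_k(0) = h_{k+1}(0) = 1 satisfying h'_{k+1} = 2 h_k h_{k+1} - h_k², i.e., h'_{k+1} + (h_{k+1} - h_k)² = h_{k+1}². Then ∫₀¹ (1 - h_{k+1}(x)/h(x))² dx = ∫₀¹ (h_{k+1}(x)/h(x) - h_k(x)/h(x))² dx. -/
/-! By the Riccati equation for `h₁`, the function `F x = x + (1 - x)² h₁ x` is an antiderivative of
`(1 - (1 - x) h₁)² - ((1 - x) h₁ - (1 - x) h₀)²`. Since `F 0 = h₁ 0 = 1` and `F 1 = 1` (the factor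
`1 - x = 1 / h x` vanishes at `1`), the difference of the two integrals is `F 1 - F 0 = 0`. -/

open intervalIntegral Set MeasureTheory

theorem integral_eq_integral_of_hasDerivAt_sub {f g F : ℝ → ℝ} {a b : ℝ}
    (hF : ∀ x ∈ uIcc a b, HasDerivAt F (f x - g x) x) (hFab : F a = F b)
    (hf : IntervalIntegrable f volume a b) (hg : IntervalIntegrable g volume a b) :
    ∫ x in a..b, f x = ∫ x in a..b, g x := by
  have hftc := integral_eq_sub_of_hasDerivAt hF (hf.sub hg)
  rw [integral_sub hf hg, hFab, sub_self] at hftc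
  exact sub_eq_zero.mp hftc

theorem hasDerivAt_add_one_sub_sq_mul {h₁ : ℝ → ℝ} {a x : ℝ}
    (hd : HasDerivAt h₁ (2 * a * h₁ x - a ^ 2) x) :
    HasDerivAt (fun y => y + (1 - y) ^ 2 * h₁ y)
      ((1 - (1 - x) * h₁ x) ^ 2 - ((1 - x) * h₁ x - (1 - x) * a) ^ 2) x := by
  have hw : HasDerivAt (fun y : ℝ => (1 - y) ^ 2) (2 * (1 - x) * -1) x := by
    simpa using ((hasDerivAt_id' x).const_sub 1).fun_pow 2
  exact ((hasDerivAt_id' x).fun_add (hw.fun_mul hd)).congr_deriv (by ring)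

theorem lemma_half_general (h₀ h₁ : ℝ → ℝ)
    (hc₀ : ContinuousOn h₀ (Set.Icc 0 1))
    (hinit₁ : h₁ 0 = 1)
    (hderiv : ∀ x ∈ Set.Icc (0:ℝ) 1,
      HasDerivAt h₁ (2 * h₀ x * h₁ x - (h₀ x)^2) x) :
    ∫ x in (0:ℝ)..1, (1 - (1 - x) * h₁ x)^2
      = ∫ x in (0:ℝ)..1, ((1 - x) * h₁ x - (1 - x) * h₀ x)^2 := by
  have hc₁ : ContinuousOn h₁ (Icc 0 1) := fun x hx =>
    (hderiv x hx).continuousAt.continuousWithinAt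
  refine integral_eq_integral_of_hasDerivAt_sub (F := fun x => x + (1 - x) ^ 2 * h₁ x)
    (fun x hx => hasDerivAt_add_one_sub_sq_mul (hderiv x ?_)) (by simp [hinit₁]) ?_ ?_
  · rwa [uIcc_of_le zero_le_one] at hx
  · exact ContinuousOn.intervalIntegrable_of_Icc zero_le_one (by fun_prop)
  · exact ContinuousOn.intervalIntegrable_of_Icc zero_le_one (by fun_prop)

/-- Lemma "half": with `h(x) = 1/(1-x)`, so `h_k(x)/h(x) = (1-x)·h_k(x)`,
`‖1 - h_{k+1}/h‖_{L²[0,1]} = ‖h_{k+1}/h - h_k/h‖_{L²[0,1]}`. -/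
theorem lemma_half (h₀ h₁ : ℝ → ℝ)
    (hc₀ : ContinuousOn h₀ (Set.Icc 0 1))
    (hinit₀ : h₀ 0 = 1) (hinit₁ : h₁ 0 = 1)
    (hderiv : ∀ x ∈ Set.Icc (0:ℝ) 1,
      HasDerivAt h₁ (2 * h₀ x * h₁ x - (h₀ x)^2) x) :
    ∫ x in (0:ℝ)..1, (1 - (1 - x) * h₁ x)^2
      = ∫ x in (0:ℝ)..1, ((1 - x) * h₁ x - (1 - x) * h₀ x)^2 :=
  lemma_half_general h₀ h₁ hc₀ hinit₁ hderiv
end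

section
/- Suppose h_k, h_{k+1} : [0,1] → ℝ are C¹ with h_{k+1}(0) = 1, h_{k+1}(x) > 0 on [0,1], h(x) = 1/(1-x), 0 ≤ h_k(x) ≤ h_{k+1}(x) ≤ h(x) on [0,1), and h'_{k+1} + (h_{k+1} - h_k)² = h²_{k+1}. Then ∫₀¹ (1 - h_{k+1}(x)/h(x))² dx ≤ 1/h_{k+1}(1) ≤ ∫₀¹ (1 - h_k(x)/h(x))² dx. -/
/-!
Dividing the Riccati equation `h₁' = h₁² - (h₁ - h₀)²` by `h₁²` shows that `1 / h₁ + x` is an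
antiderivative of `((h₁ - h₀) / h₁)²`, so `1 / h₁ 1 = ∫₀¹ ((h₁ - h₀) / h₁)²` because `h₁ 0 = 1`.
Similarly `x + (1 - x)² h₁` is an antiderivative of `(1 - (1 - x) h₁)² - ((1 - x)(h₁ - h₀))²`
and takes the value `1` at both ends. The two inequalities are then pointwise comparisons of
integrands, using `(1 - x) h₁ ≤ 1` and `0 ≤ h₀ ≤ h₁`.
-/

open Set intervalIntegral

theorem integral_sq_div_eq_of_hasDerivAt {f d : ℝ → ℝ} {a b : ℝ} (hab : a ≤ b)
    (hf : ∀ x ∈ Icc a b, HasDerivAt f (f x ^ 2 - d x ^ 2) x)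
    (hf₀ : ∀ x ∈ Icc a b, f x ≠ 0) (hd : ContinuousOn d (Icc a b)) :
    ∫ x in a..b, (d x / f x) ^ 2 = (f b)⁻¹ - (f a)⁻¹ + (b - a) := by
  have hfc : ContinuousOn f (Icc a b) := fun x hx => (hf x hx).continuousAt.continuousWithinAt
  rw [integral_eq_sub_of_hasDerivAt (f := fun x => (f x)⁻¹ + x)]
  · ring
  · rw [uIcc_of_le hab]
    intro x hx
    refine (((hf x hx).fun_inv (hf₀ x hx)).add (hasDerivAt_id x)).congr_deriv ?_
    field_simp [hf₀ x hx]
    ring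
  · exact ((hd.div hfc hf₀).pow 2).intervalIntegrable_of_Icc hab

theorem integral_sq_one_sub_mul_eq_of_hasDerivAt {f d : ℝ → ℝ}
    (hf : ∀ x ∈ Icc (0 : ℝ) 1, HasDerivAt f (f x ^ 2 - d x ^ 2) x) (hf0 : f 0 = 1)
    (hd : ContinuousOn d (Icc 0 1)) :
    ∫ x in (0 : ℝ)..1, (1 - (1 - x) * f x) ^ 2 = ∫ x in (0 : ℝ)..1, ((1 - x) * d x) ^ 2 := by
  have hfc : ContinuousOn f (Icc 0 1) := fun x hx => (hf x hx).continuousAt.continuousWithinAt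
  have hint {u : ℝ → ℝ} (hu : ContinuousOn u (Icc 0 1)) :
      IntervalIntegrable u MeasureTheory.volume 0 1 :=
    hu.intervalIntegrable_of_Icc zero_le_one
  rw [← sub_eq_zero, ← integral_sub (hint (by fun_prop)) (hint (by fun_prop)),
    integral_eq_sub_of_hasDerivAt (f := fun x => x + (1 - x) ^ 2 * f x) ?_ (hint (by fun_prop))]
  · simp [hf0]
  · rw [uIcc_of_le zero_le_one]
    intro x hx
    have hsq : HasDerivAt (fun y : ℝ => (1 - y) ^ 2) (-(2 * (1 - x))) x := by
      simpa using ((hasDerivAt_id x).const_sub 1).fun_pow 2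
    refine ((hasDerivAt_id x).add (hsq.mul (hf x hx))).congr_deriv ?_
    ring

theorem sq_mul_le_sq_div {t d f : ℝ} (ht : 0 ≤ t) (hd : 0 ≤ d) (hf : 0 < f) (htf : t * f ≤ 1) :
    (t * d) ^ 2 ≤ (d / f) ^ 2 := by
  have : t * d ≤ d / f := by
    rw [le_div_iff₀ hf]
    nlinarith
  exact pow_le_pow_left₀ (mul_nonneg ht hd) this 2

theorem sq_sub_div_le_sq_one_sub_mul {t g f : ℝ} (hg : 0 ≤ g) (hgf : g ≤ f) (hf : 0 < f)
    (htf : t * f ≤ 1) : ((f - g) / f) ^ 2 ≤ (1 - t * g) ^ 2 := by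
  have hsub : (f - g) / f = 1 - g / f := by field_simp
  have hnn : 0 ≤ 1 - g / f := by rw [sub_nonneg, div_le_one hf]; exact hgf
  have : t * g ≤ g / f := by
    rw [le_div_iff₀ hf]
    nlinarith
  rw [hsub]
  exact pow_le_pow_left₀ hnn (by linarith) 2

/-- `h₀, h₁` stand for `h_k, h_{k+1}`, and `h_k(x)/h(x)` is written `(1-x)·h_k(x)`. -/
theorem prop_one (h₀ h₁ : ℝ → ℝ)
    (hc₀ : ContinuousOn h₀ (Set.Icc 0 1))
    (hinit₁ : h₁ 0 = 1)
    (hpos : ∀ x ∈ Set.Icc (0:ℝ) 1, 0 < h₁ x)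
    (hord : ∀ x ∈ Set.Ico (0:ℝ) 1,
      0 ≤ h₀ x ∧ h₀ x ≤ h₁ x ∧ (1 - x) * h₁ x ≤ 1)
    (hderiv : ∀ x ∈ Set.Icc (0:ℝ) 1,
      HasDerivAt h₁ ((h₁ x)^2 - (h₁ x - h₀ x)^2) x) :
    (∫ x in (0:ℝ)..1, (1 - (1 - x) * h₁ x)^2) ≤ 1 / h₁ 1 ∧
      1 / h₁ 1 ≤ ∫ x in (0:ℝ)..1, (1 - (1 - x) * h₀ x)^2 := by
  have hc₁ : ContinuousOn h₁ (Icc 0 1) := fun x hx => (hderiv x hx).continuousAt.continuousWithinAt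
  have hd : ContinuousOn (fun x => h₁ x - h₀ x) (Icc 0 1) := hc₁.sub hc₀
  have hq : ContinuousOn (fun x => ((h₁ x - h₀ x) / h₁ x) ^ 2) (Icc 0 1) :=
    (hd.div hc₁ fun x hx => (hpos x hx).ne').pow 2
  have hint {u : ℝ → ℝ} (hu : ContinuousOn u (Icc 0 1)) : IntervalIntegrable u MeasureTheory.volume 0 1 :=
    hu.intervalIntegrable_of_Icc zero_le_one
  have hinv : ∫ x in (0:ℝ)..1, ((h₁ x - h₀ x) / h₁ x) ^ 2 = 1 / h₁ 1 := by
    rw [integral_sq_div_eq_of_hasDerivAt zero_le_one hderiv (fun x hx => (hpos x hx).ne') hd,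
      hinit₁]
    ring
  rw [← hinv, integral_sq_one_sub_mul_eq_of_hasDerivAt hderiv hinit₁ hd]
  constructor
  all_goals
    refine integral_mono_on_of_le_Ioo zero_le_one (hint (by fun_prop)) (hint (by fun_prop))
      fun x hx => ?_
    obtain ⟨hh₀, hle, hbound⟩ := hord x (Ioo_subset_Ico_self hx)
    have hx₁ := hpos x (Ioo_subset_Icc_self hx)
  · exact sq_mul_le_sq_div (sub_nonneg.2 hx.2.le) (sub_nonneg.2 hle) hx₁ hbound
  · exact sq_sub_div_le_sq_one_sub_mul hh₀ hle hx₁ hbound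
end

section
/- Let X : [a,b] → ℝ be continuous and define d_X(s,t) = (X(s) - inf_{u∈[min(s,t),max(s,t)]} X(u)) + (X(t) - inf_{u∈[min(s,t),max(s,t)]} X(u)). Then d_X is a pseudometric on [a,b]: it is nonnegative, symmetric, vanishes on the diagonal, and satisfies the triangle inequality. -/
/-- The tree pseudometric of a continuous path:
`d_X(s,t) = (X(s) - inf X on [s∧t, s∨t]) + (X(t) - inf X on [s∧t, s∨t])`. -/
noncomputable def pathDist (X : ℝ → ℝ) (s t : ℝ) : ℝ :=
  (X s - sInf (X '' Set.Icc (min s t) (max s t))) +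
    (X t - sInf (X '' Set.Icc (min s t) (max s t)))

lemma pathDist_cover {s t u v : ℝ} (hv : v ∈ Set.Icc (min s u) (max s u)) :
    v ∈ Set.Icc (min s t) (max s t) ∪ Set.Icc (min t u) (max t u) := by
  simp only [Set.mem_Icc, Set.mem_union, min_le_iff, le_max_iff] at *
  obtain ⟨h1, h2⟩ := hv
  rcases le_total v t with h | h <;> tauto

lemma pathDist_sub {a b s t : ℝ} (hs : s ∈ Set.Icc a b) (ht : t ∈ Set.Icc a b) :
    Set.Icc (min s t) (max s t) ⊆ Set.Icc a b := fun x hx =>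
  ⟨le_trans (le_min hs.1 ht.1) hx.1, le_trans hx.2 (max_le hs.2 ht.2)⟩


theorem pathDist_is_pseudometric (X : ℝ → ℝ) (a b : ℝ) (hab : a ≤ b)
    (hX : ContinuousOn X (Set.Icc a b)) :
    (∀ s ∈ Set.Icc a b, ∀ t ∈ Set.Icc a b, 0 ≤ pathDist X s t) ∧
    (∀ s ∈ Set.Icc a b, ∀ t ∈ Set.Icc a b, pathDist X s t = pathDist X t s) ∧
    (∀ s ∈ Set.Icc a b, pathDist X s s = 0) ∧
    (∀ s ∈ Set.Icc a b, ∀ t ∈ Set.Icc a b, ∀ u ∈ Set.Icc a b,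
      pathDist X s u ≤ pathDist X s t + pathDist X t u) := by
  have bdd : ∀ s ∈ Set.Icc a b, ∀ t ∈ Set.Icc a b,
      BddBelow (X '' Set.Icc (min s t) (max s t)) := fun s hs t ht =>
    (isCompact_Icc.image_of_continuousOn (hX.mono (pathDist_sub hs ht))).bddBelow
  have memL : ∀ s t : ℝ, X s ∈ X '' Set.Icc (min s t) (max s t) := fun s t =>
    ⟨s, ⟨min_le_left _ _, le_max_left _ _⟩, rfl⟩
  have memR : ∀ s t : ℝ, X t ∈ X '' Set.Icc (min s t) (max s t) := fun s t =>
    ⟨t, ⟨min_le_right _ _, le_max_right _ _⟩, rfl⟩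
  refine ⟨fun s hs t ht => ?_, fun s hs t ht => ?_, fun s hs => ?_, fun s hs t ht u hu => ?_⟩
  · have h1 := csInf_le (bdd s hs t ht) (memL s t)
    have h2 := csInf_le (bdd s hs t ht) (memR s t)
    unfold pathDist; linarith
  · simp [pathDist, min_comm, max_comm, add_comm]
  · simp [pathDist, Set.Icc_self]
  · set m1 := sInf (X '' Set.Icc (min s t) (max s t)) with hm1
    set m2 := sInf (X '' Set.Icc (min t u) (max t u)) with hm2
    set m := sInf (X '' Set.Icc (min s u) (max s u)) with hm
    have hne : (X '' Set.Icc (min s u) (max s u)).Nonempty :=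
      ⟨X s, memL s u⟩
    have hmin : min m1 m2 ≤ m := by
      apply le_csInf hne
      rintro x ⟨v, hv, rfl⟩
      rcases pathDist_cover (t := t) hv with h | h
      · exact le_trans (min_le_left _ _) (csInf_le (bdd s hs t ht) ⟨v, h, rfl⟩)
      · exact le_trans (min_le_right _ _) (csInf_le (bdd t ht u hu) ⟨v, h, rfl⟩)
    have h1s : m1 ≤ X s := csInf_le (bdd s hs t ht) (memL s t)
    have h1t : m1 ≤ X t := csInf_le (bdd s hs t ht) (memR s t)
    have h2t : m2 ≤ X t := csInf_le (bdd t ht u hu) (memL t u)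
    have h2u : m2 ≤ X u := csInf_le (bdd t ht u hu) (memR t u)
    unfold pathDist
    rw [← hm1, ← hm2, ← hm]
    rcases le_total m1 m2 with h | h <;> simp [min_def, h] at hmin <;> linarith
end
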